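/- For a connected graph G with n vertices, h bridges, and s single-vertex components after bridge deletion, any spanning connected Eulerian sub-multigraph of G has at least n + 2h − s edges. -/

import Mathlib

open Classical in
/-- Degree of a vertex in a multigraph given by a multiset of edges. -/
noncomputable def mDegree {V : Type} (E : Multiset (Sym2 V)) (v : V) : ℕ :=
  Multiset.card (E.filter fun e => v ∈ e)

/-- The simple graph underlying a multiset of edges (used for connectivity). -/
def mGraph {V : Type} (E : Multiset (Sym2 V)) : SimpleGraph V :=
  SimpleGraph.fromEdgeSet {e | e ∈ E}

/-- `H` is a spanning connected Eulerian sub-multigraph of `G`. -/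
def IsSpanningEulerian {V : Type} (G : SimpleGraph V) (H : Multiset (Sym2 V)) : Prop :=
  (∀ e ∈ H, e ∈ G.edgeSet) ∧ (∀ v : V, 0 < mDegree H v) ∧
  (∀ v : V, Even (mDegree H v)) ∧ (∀ u v : V, (mGraph H).Reachable u v)

/-!
Count the degree sum `2|H|` separately over bridge and non-bridge edges. For a bridge `ab`, the
only edge of `G` leaving the component of `a` in `G - ab` is `ab` itself; an even-degree
multigraph crosses every cut an even number of times and a connected spanning one crosses it at
least once, so `H` uses each bridge at least twice and the bridges contribute at least `4h`. The
bridge-degree of every vertex is therefore even, hence so is its non-bridge degree; at each of the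
`n - s` vertices incident to a non-bridge edge of `G` it is also positive, hence at least `2`.
-/

open Classical

lemma mul_card_le_card_of_le_count {α : Type*} [DecidableEq α] {k : ℕ} {B : Finset α}
    {s : Multiset α} (h : ∀ a ∈ B, k ≤ s.count a) : k * B.card ≤ Multiset.card s := by
  have hle : k • B.val ≤ s := Multiset.le_iff_count.2 fun a => by
    rw [Multiset.count_nsmul]
    by_cases ha : a ∈ B
    · rw [Multiset.count_eq_one_of_mem B.nodup ha, mul_one]
      exact h a ha
    · rw [Multiset.count_eq_zero_of_notMem ha, mul_zero]
      exact Nat.zero_le _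
  simpa [Multiset.card_nsmul] using Multiset.card_le_card hle

section Multigraph

variable {V : Type}

def CrossesCut (X : Set V) (e : Sym2 V) : Prop :=
  ∃ a ∈ e, ∃ b ∈ e, a ∈ X ∧ b ∉ X

lemma mDegree_cons (e : Sym2 V) (E : Multiset (Sym2 V)) (v : V) :
    mDegree (e ::ₘ E) v = mDegree E v + if v ∈ e then 1 else 0 := by
  unfold mDegree
  rw [Multiset.filter_cons]
  split <;> simp [add_comm]

lemma mDegree_add (E F : Multiset (Sym2 V)) (v : V) :
    mDegree (E + F) v = mDegree E v + mDegree F v := by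
  simp only [mDegree, Multiset.filter_add, Multiset.card_add]

lemma mDegree_filter_add_mDegree_filter_not (E : Multiset (Sym2 V)) (p : Sym2 V → Prop) (v : V) :
    mDegree (E.filter p) v + mDegree (E.filter (¬ p ·)) v = mDegree E v := by
  rw [← mDegree_add, Multiset.filter_add_not]

lemma even_mDegree_of_forall_even_count {E : Multiset (Sym2 V)}
    (h : ∀ e ∈ E, Even (E.count e)) (v : V) : Even (mDegree E v) := by
  rw [mDegree, ← Multiset.toFinset_sum_count_eq]
  refine Finset.even_sum _ fun e he => ?_
  rw [Multiset.count_filter]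
  split_ifs
  · exact h e (Multiset.mem_of_mem_filter (Multiset.mem_toFinset.1 he))
  · exact ⟨0, rfl⟩

lemma sum_mDegree_eq (E : Multiset (Sym2 V)) (hE : ∀ e ∈ E, ¬ e.IsDiag) (X : Finset V) :
    ∑ v ∈ X, mDegree E v =
      2 * Multiset.card (E.filter fun e => ∀ a ∈ e, a ∈ X) +
        Multiset.card (E.filter (CrossesCut X)) := by
  induction E using Multiset.induction_on with
  | empty => simp [mDegree]
  | cons e E ih =>
    induction e using Sym2.ind with
    | _ a b =>
    have hab : a ≠ b := by simpa using hE s(a, b) (Multiset.mem_cons_self _ _)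
    have hendpoints : ∀ v, (if v ∈ s(a, b) then 1 else 0) =
        (if v = a then 1 else 0) + (if v = b then 1 else 0) := by
      intro v
      by_cases hva : v = a <;> by_cases hvb : v = b <;> simp_all
    simp only [mDegree_cons, hendpoints, Finset.sum_add_distrib, Finset.sum_ite_eq',
      ih fun f hf => hE f (Multiset.mem_cons_of_mem hf), Multiset.filter_cons]
    by_cases ha : a ∈ X <;> by_cases hb : b ∈ X <;>
      simp_all [CrossesCut] <;> omega

lemma sum_mDegree_eq_two_mul_card [Fintype V] (E : Multiset (Sym2 V))
    (hE : ∀ e ∈ E, ¬ e.IsDiag) : ∑ v, mDegree E v = 2 * Multiset.card E := by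
  have hnone : E.filter (CrossesCut (Finset.univ : Finset V)) = 0 :=
    Multiset.filter_eq_nil.2 fun _ _ ⟨_, _, _, _, _, hb⟩ => hb (Finset.mem_univ _)
  rw [sum_mDegree_eq E hE Finset.univ, hnone]
  simp

lemma even_card_filter_crossesCut (E : Multiset (Sym2 V)) (hE : ∀ e ∈ E, ¬ e.IsDiag)
    (heven : ∀ v, Even (mDegree E v)) (X : Finset V) :
    Even (Multiset.card (E.filter (CrossesCut X))) := by
  have hsum : Even (∑ v ∈ X, mDegree E v) := Finset.even_sum _ fun v _ => heven v
  rw [sum_mDegree_eq E hE X] at hsum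
  simpa [Nat.even_add] using hsum

lemma exists_mem_crossesCut {E : Multiset (Sym2 V)} {X : Set V} {x y : V}
    (hxy : (mGraph E).Reachable x y) (hx : x ∈ X) (hy : y ∉ X) :
    ∃ e ∈ E, CrossesCut X e := by
  obtain ⟨w⟩ := hxy
  obtain ⟨d, -, hd₁, hd₂⟩ := w.exists_boundary_dart X hx hy
  have hd : d.edge ∈ {e | e ∈ E} \ Sym2.diagSet := by
    simpa [mGraph] using d.edge_mem
  exact ⟨d.edge, hd.1, d.fst, Sym2.mem_mk_left _ _, d.snd, Sym2.mem_mk_right _ _, hd₁, hd₂⟩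

end Multigraph
section Bridges

variable {V : Type} {G : SimpleGraph V} {H : Multiset (Sym2 V)}

lemma mGraph_le (hsub : ∀ e ∈ H, e ∈ G.edgeSet) : mGraph H ≤ G := by
  rw [mGraph, SimpleGraph.fromEdgeSet_le]
  exact fun e he => hsub e he.1

lemma mem_of_crossesCut_reachable_deleteEdges {F : Set (Sym2 V)} {a : V} {e : Sym2 V}
    (he : e ∈ G.edgeSet) (hcross : CrossesCut {w | (G.deleteEdges F).Reachable a w} e) :
    e ∈ F := by
  obtain ⟨x, hx, y, hy, hxX, hyX⟩ := hcross
  have hxy : x ≠ y := fun h => hyX (h ▸ hxX)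
  rw [(Sym2.mem_and_mem_iff hxy).1 ⟨hx, hy⟩] at he ⊢
  by_contra heF
  exact hyX (hxX.trans (SimpleGraph.deleteEdges_adj.2 ⟨he, heF⟩).reachable)

lemma filter_crossesCut_eq_filter_eq (hsub : ∀ e ∈ H, e ∈ G.edgeSet) {a b : V}
    (hbr : G.IsBridge s(a, b)) :
    H.filter (CrossesCut {w | (G.deleteEdges {s(a, b)}).Reachable a w}) =
      H.filter (s(a, b) = ·) := by
  refine Multiset.filter_congr fun e he => ⟨fun hcross => ?_, ?_⟩
  · exact (mem_of_crossesCut_reachable_deleteEdges (hsub e he) hcross).symm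
  · rintro rfl
    exact ⟨a, Sym2.mem_mk_left a b, b, Sym2.mem_mk_right a b, .refl a, hbr⟩

lemma even_count_of_isBridge [Fintype V] (hsub : ∀ e ∈ H, e ∈ G.edgeSet)
    (heven : ∀ v, Even (mDegree H v)) {e : Sym2 V} (hbr : G.IsBridge e) :
    Even (H.count e) := by
  induction e using Sym2.ind with
  | _ a b =>
  have hcut := even_card_filter_crossesCut H
    (fun f hf => G.not_isDiag_of_mem_edgeSet (hsub f hf)) heven
    {w | (G.deleteEdges {s(a, b)}).Reachable a w}.toFinset
  rwa [Set.coe_toFinset, filter_crossesCut_eq_filter_eq hsub hbr,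
    ← Multiset.count_eq_card_filter_eq] at hcut

lemma mem_of_isBridge (hsub : ∀ e ∈ H, e ∈ G.edgeSet) (hconn : (mGraph H).Preconnected)
    {e : Sym2 V} (hbr : G.IsBridge e) : e ∈ H := by
  induction e using Sym2.ind with
  | _ a b =>
  obtain ⟨f, hf, hcross⟩ :=
    exists_mem_crossesCut (X := {w | (G.deleteEdges {s(a, b)}).Reachable a w})
      (hconn a b) (.refl a) hbr
  rwa [← Set.mem_singleton_iff.1 (mem_of_crossesCut_reachable_deleteEdges (hsub f hf) hcross)]

lemma two_le_count_of_isBridge [Fintype V] (hsub : ∀ e ∈ H, e ∈ G.edgeSet)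
    (heven : ∀ v, Even (mDegree H v)) (hconn : (mGraph H).Preconnected) {e : Sym2 V}
    (hbr : G.IsBridge e) : 2 ≤ H.count e := by
  obtain ⟨k, hk⟩ := even_count_of_isBridge hsub heven hbr
  have := Multiset.one_le_count_iff_mem.2 (mem_of_isBridge hsub hconn hbr)
  omega

/-- An `H`-path from `v` to `u` leaves `v` only once; were its first edge a bridge `vc`, the rest
of the path followed by `uv` would join `c` to `v` avoiding `vc`. -/
lemma exists_mem_not_isBridge_of_adj (hsub : ∀ e ∈ H, e ∈ G.edgeSet)
    (hconn : (mGraph H).Preconnected) {v u : V} (hadj : G.Adj v u)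
    (hnb : ¬ G.IsBridge s(v, u)) : ∃ e ∈ H, v ∈ e ∧ ¬ G.IsBridge e := by
  by_contra! hall
  obtain ⟨p, hp⟩ := (hconn v u).exists_isPath
  cases p with
  | nil => exact hadj.ne rfl
  | @cons _ c _ hvc q =>
    have hbr : G.IsBridge s(v, c) :=
      hall _ ((SimpleGraph.fromEdgeSet_adj _).1 hvc).1 (Sym2.mem_mk_left v c)
    have hv : v ∉ q.support := ((SimpleGraph.Walk.cons_isPath_iff _ _).1 hp).2
    apply hbr
    rw [SimpleGraph.reachable_deleteEdges_iff_exists_walk]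
    refine ⟨.cons hadj (q.mapLe (mGraph_le hsub)).reverse, ?_⟩
    simp only [SimpleGraph.Walk.edges_cons, SimpleGraph.Walk.edges_reverse,
      SimpleGraph.Walk.edges_mapLe_eq_edges, List.mem_cons, List.mem_reverse, not_or]
    exact ⟨fun h => hnb (h ▸ hbr), fun h => hv (q.fst_mem_support_of_mem_edges h)⟩

lemma two_le_mDegree_filter_not_isBridge [Fintype V] (hsub : ∀ e ∈ H, e ∈ G.edgeSet)
    (heven : ∀ v, Even (mDegree H v)) (hconn : (mGraph H).Preconnected) {v u : V}
    (hadj : G.Adj v u) (hnb : ¬ G.IsBridge s(v, u)) :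
    2 ≤ mDegree (H.filter (¬ G.IsBridge ·)) v := by
  have hbridges : Even (mDegree (H.filter G.IsBridge) v) :=
    even_mDegree_of_forall_even_count (fun e he => by
      rw [Multiset.count_filter_of_pos (Multiset.of_mem_filter he)]
      exact even_count_of_isBridge hsub heven (Multiset.of_mem_filter he)) v
  have hparity := mDegree_filter_add_mDegree_filter_not H G.IsBridge v ▸ heven v
  obtain ⟨e, he, hve, henb⟩ := exists_mem_not_isBridge_of_adj hsub hconn hadj hnb
  have hpos : 0 < mDegree (H.filter (¬ G.IsBridge ·)) v :=
    Multiset.card_pos_iff_exists_mem.2 ⟨e, by simp [he, hve, henb]⟩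
  rw [Nat.even_add] at hparity
  obtain ⟨k, hk⟩ := hparity.1 hbridges
  omega

lemma two_mul_ncard_le_sum_mDegree_filter_not_isBridge [Fintype V]
    (hsub : ∀ e ∈ H, e ∈ G.edgeSet) (heven : ∀ v, Even (mDegree H v))
    (hconn : (mGraph H).Preconnected) :
    2 * {v | ∃ w, (G.deleteEdges {e | G.IsBridge e}).Adj v w}.ncard ≤
      ∑ v, mDegree (H.filter (¬ G.IsBridge ·)) v := by
  rw [Set.ncard_eq_toFinset_card', mul_comm, ← smul_eq_mul]
  refine (Finset.card_nsmul_le_sum _ _ _ fun v hv => ?_).trans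
    (Finset.sum_le_sum_of_subset (Finset.subset_univ _))
  obtain ⟨w, hw⟩ := Set.mem_toFinset.1 hv
  rw [SimpleGraph.deleteEdges_adj] at hw
  exact two_le_mDegree_filter_not_isBridge hsub heven hconn hw.1 hw.2

end Bridges

theorem stmt17_general {V : Type} [Fintype V] (G : SimpleGraph V)
    (n h s : ℕ) (hn : n = Fintype.card V)
    (hh : h = {e | e ∈ G.edgeSet ∧ G.IsBridge e}.ncard)
    (G2 : SimpleGraph V) (hG2 : G2 = G.deleteEdges {e | G.IsBridge e})
    (hs : s = {v : V | ∀ w, ¬ G2.Adj v w}.ncard)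
    (H : Multiset (Sym2 V)) (hH : IsSpanningEulerian G H) :
    n + 2 * h ≤ Multiset.card H + s := by
  obtain ⟨hsub, -, heven, hconn⟩ := hH
  have hloop : ∀ e ∈ H, ¬ e.IsDiag := fun e he => G.not_isDiag_of_mem_edgeSet (hsub e he)
  have hbridges : 2 * h ≤ Multiset.card (H.filter G.IsBridge) := by
    rw [hh, Set.ncard_eq_toFinset_card']
    refine mul_card_le_card_of_le_count fun e he => ?_
    rw [Set.mem_toFinset] at he
    rw [Multiset.count_filter_of_pos he.2]
    exact two_le_count_of_isBridge hsub heven hconn he.2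
  have hnonbridges := two_mul_ncard_le_sum_mDegree_filter_not_isBridge hsub heven hconn
  have hisolated : {v | ∀ w, ¬ G2.Adj v w}ᶜ = {v | ∃ w, G2.Adj v w} := by
    ext v
    simp
  have hcount := Set.ncard_add_ncard_compl {v | ∀ w, ¬ G2.Adj v w}
  rw [hisolated, Nat.card_eq_fintype_card] at hcount
  have hdegrees : 2 * Multiset.card (H.filter G.IsBridge) +
      ∑ v, mDegree (H.filter (¬ G.IsBridge ·)) v = 2 * Multiset.card H := by
    rw [← sum_mDegree_eq_two_mul_card _ fun e he => hloop e (Multiset.mem_of_mem_filter he),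
      ← sum_mDegree_eq_two_mul_card H hloop, ← Finset.sum_add_distrib]
    simp only [mDegree_filter_add_mDegree_filter_not]
  subst hG2
  omega

/-- For a connected graph `G` with `n` vertices, `h` bridges, and `s`
single-vertex components after deleting the bridges, every spanning connected Eulerian
sub-multigraph of `G` has at least `n + 2h - s` edges. -/
theorem stmt17 {V : Type} [Fintype V] (G : SimpleGraph V) (hconn : G.Connected)
    (n h s : ℕ) (hn : n = Fintype.card V)
    (hh : h = {e | e ∈ G.edgeSet ∧ G.IsBridge e}.ncard)
    (G2 : SimpleGraph V) (hG2 : G2 = G.deleteEdges {e | G.IsBridge e})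
    (hs : s = {v : V | ∀ w, ¬ G2.Adj v w}.ncard)
    (H : Multiset (Sym2 V)) (hH : IsSpanningEulerian G H) :
    n + 2 * h ≤ Multiset.card H + s :=
  stmt17_general G n h s hn hh G2 hG2 hs H hH
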